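/- For every ε > 0 there exist ρ > 1 and u > 0 such that sup_{Ψ ∈ 𝕂_{𝒢'}} sup_{1 ≤ ρ' ≤ ρ, 0 ≤ u' ≤ u} sup_{K ∈ 𝒢} | α(ρ', u') Ψ(K_{ρ'}) − Ψ(K) | ≤ ε, where α(ρ', u') := (ρ'^{−1}(1 + u' log ρ'))^{1/2} and K_{ρ'}(x) := K(ρ'^{−1/d} x). -/

import Mathlib

open MeasureTheory ProbabilityTheory Filter Set
open scoped ENNReal NNReal Topology ProbabilityTheory

noncomputable section

/-- `K ((x - z) / h^(1/d))`. -/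
def rescaleK (d : ℕ) (K : (Fin d → ℝ) → ℝ) (h : ℝ) (z x : Fin d → ℝ) : ℝ :=
  K ((h ^ (1 / (d : ℝ)))⁻¹ • (x - z))

/-- The local empirical process `G_n(K, h, z)` of the paper. -/
def Gproc {Ω : Type} [MeasureSpace Ω] (d : ℕ) (Z : ℕ → Ω → (Fin d → ℝ))
    (n : ℕ) (K : (Fin d → ℝ) → ℝ) (h : ℝ) (z : Fin d → ℝ) (ω : Ω) : ℝ :=
  ∑ i ∈ Finset.range n,
    (rescaleK d K h z (Z (i + 1) ω) - ∫ ω', rescaleK d K h z (Z 1 ω') ∂(ℙ : Measure Ω))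

/-- The poissonized local empirical process `G̃_n(K, h, z)`. -/
def Gtilde {Ω : Type} [MeasureSpace Ω] (d : ℕ) (Z : ℕ → Ω → (Fin d → ℝ)) (η : ℕ → Ω → ℕ)
    (n : ℕ) (K : (Fin d → ℝ) → ℝ) (h : ℝ) (z : Fin d → ℝ) (ω : Ω) : ℝ :=
  (∑ i ∈ Finset.range (η n ω), rescaleK d K h z (Z (i + 1) ω)) -
    (n : ℝ) * ∫ ω', rescaleK d K h z (Z 1 ω') ∂(ℙ : Measure Ω)

/-- sup-norm over the index class `S` : `‖Φ‖_S`. -/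
def supNormOn {α : Type*} (S : Set α) (Φ : α → ℝ) : ℝ := ⨆ K ∈ S, |Φ K|

/-- `g` belongs to the closed linear subspace of `L²` spanned by `𝒢`. -/
def inL2ClosedSpan (d : ℕ) (𝒢 : Set ((Fin d → ℝ) → ℝ)) (g : (Fin d → ℝ) → ℝ) : Prop :=
  ∀ ε > 0, ∃ p ∈ Submodule.span ℝ 𝒢, ∫ x, (g x - p x) ^ 2 < ε

/-- The rate function `J` of the isonormal Gaussian process generated by `(L²_*(𝒢), λ)`. -/
def JrateFn (d : ℕ) (𝒢 : Set ((Fin d → ℝ) → ℝ)) (Ψ : ((Fin d → ℝ) → ℝ) → ℝ) : ℝ≥0∞ :=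
  sInf {c : ℝ≥0∞ | ∃ g : (Fin d → ℝ) → ℝ, Measurable g ∧
    MemLp g 2 (volume : Measure (Fin d → ℝ)) ∧ inL2ClosedSpan d 𝒢 g ∧
    (∀ K ∈ 𝒢, Ψ K = ∫ x, g x * K x) ∧ c = ENNReal.ofReal (∫ x, (g x) ^ 2)}

/-- `𝕂 = {Ψ : J(Ψ) ≤ 1}`. -/
def KsetG (d : ℕ) (𝒢 : Set ((Fin d → ℝ) → ℝ)) : Set ((((Fin d → ℝ) → ℝ)) → ℝ) :=
  {Ψ | JrateFn d 𝒢 Ψ ≤ 1}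

/-- The class `ℱ = {K(λ(· - z))}`. -/
def Fclass (d : ℕ) (𝒢 : Set ((Fin d → ℝ) → ℝ)) : Set ((Fin d → ℝ) → ℝ) :=
  {F | ∃ K ∈ 𝒢, ∃ z : Fin d → ℝ, ∃ lam : ℝ, 0 < lam ∧ F = fun x => K (lam • (x - z))}

/-- Uniform covering number bound `𝒩(ε, F) ≤ N`, w.r.t. `L²(P)` over all probability
measures `P`, with envelope function `env`. -/
def UnifCoveringLE (d : ℕ) (F : Set ((Fin d → ℝ) → ℝ)) (env : (Fin d → ℝ) → ℝ)
    (ε N : ℝ) : Prop :=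
  ∀ P : Measure (Fin d → ℝ), IsProbabilityMeasure P →
    ∃ S : Finset ((Fin d → ℝ) → ℝ), (S.card : ℝ) ≤ N ∧
      ∀ g ∈ F, ∃ s ∈ S, ∫ x, (g x - s x) ^ 2 ∂P ≤ ε ^ 2 * ∫ x, env x ^ 2 ∂P

/-- Pointwise separability of a class of functions. -/
def PointwiseSeparable (d : ℕ) (F : Set ((Fin d → ℝ) → ℝ)) : Prop :=
  ∃ F₀ ⊆ F, F₀.Countable ∧ ∀ g ∈ F, ∃ u : ℕ → ((Fin d → ℝ) → ℝ),
    (∀ n, u n ∈ F₀) ∧ ∀ x, Tendsto (fun n => u n x) atTop (𝓝 (g x))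

/-- Assumptions (HK1), (HK2), (HK4), (HK5) on the class `𝒢` (plus Borel measurability). -/
structure HKbase (d : ℕ) (𝒢 : Set ((Fin d → ℝ) → ℝ)) : Prop where
  meas : ∀ K ∈ 𝒢, Measurable K
  hk1a : Tendsto (fun u : Fin d → ℝ => ⨆ K ∈ 𝒢, ∫ x, (K x - K (x + u)) ^ 2) (𝓝 0) (𝓝 0)
  hk1b : Tendsto (fun lam : ℝ => ⨆ K ∈ 𝒢, ∫ x, (K (lam • x) - K x) ^ 2) (𝓝 1) (𝓝 0)
  hk2 : ∀ K ∈ 𝒢, ∀ x, |K x| ≤ 1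
  hk4 : ∃ C₀ > (0:ℝ), ∃ v₀ > (0:ℝ), ∀ ε ∈ Ioo (0:ℝ) 1,
    UnifCoveringLE d (Fclass d 𝒢) (fun _ => 1) ε (C₀ * ε ^ (-v₀))
  hk5 : PointwiseSeparable d (Fclass d 𝒢)

/-- Assumption (HK3): `K` vanishes outside `[0,1]^d`. -/
def HK3 (d : ℕ) (𝒢 : Set ((Fin d → ℝ) → ℝ)) : Prop :=
  ∀ K ∈ 𝒢, ∀ x ∉ Icc (0 : Fin d → ℝ) 1, K x = 0

/-- The i.i.d. assumption on the sample `(Z_i)_{i ≥ 1}`. -/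
def IIDseq {Ω : Type} [MeasureSpace Ω] {d : ℕ} (Z : ℕ → Ω → (Fin d → ℝ)) : Prop :=
  (∀ i, Measurable (Z i)) ∧ iIndepFun Z (ℙ : Measure Ω) ∧
    ∀ i, Measure.map (Z i) (ℙ : Measure Ω) = Measure.map (Z 1) (ℙ : Measure Ω)

/-- Assumption (Hf) : `Z_1` has a density `f` that is continuous and strictly positive on an
`α`-neighbourhood of `H` (for the max-norm, which is the sup metric of `Fin d → ℝ`). -/
structure HfCond {Ω : Type} [MeasureSpace Ω] (d : ℕ) (Z : ℕ → Ω → (Fin d → ℝ))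
    (H : Set (Fin d → ℝ)) (f : (Fin d → ℝ) → ℝ) (α : ℝ) : Prop where
  αpos : 0 < α
  density : Measure.map (Z 1) (ℙ : Measure Ω) =
    (volume : Measure (Fin d → ℝ)).withDensity (fun x => ENNReal.ofReal (f x))
  cont : ContinuousOn f {z | Metric.infDist z H < α}
  fpos : ∀ z, Metric.infDist z H < α → 0 < f z

/-- The Csörgő–Révész–Stute conditions (HV1)–(HV3). -/
def CRSseq (h : ℕ → ℝ) : Prop :=
  (∀ n, 0 < h n ∧ h n < 1) ∧ Antitone h ∧ Tendsto h atTop (𝓝 0) ∧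
  Monotone (fun n : ℕ => (n : ℝ) * h n) ∧ Tendsto (fun n : ℕ => (n : ℝ) * h n) atTop atTop ∧
  Tendsto (fun n : ℕ => (n : ℝ) * h n / Real.log n) atTop atTop ∧
  Tendsto (fun n : ℕ => Real.log (1 / h n) / Real.log (Real.log n)) atTop atTop

/-- The normalized local empirical process `G_n(·,h,z)/√(2 f(z) n h log (1/h))`. -/
def normG {Ω : Type} [MeasureSpace Ω] (d : ℕ) (Z : ℕ → Ω → (Fin d → ℝ))
    (f : (Fin d → ℝ) → ℝ) (n : ℕ) (h : ℝ) (z : Fin d → ℝ) (ω : Ω)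
    (K : (Fin d → ℝ) → ℝ) : ℝ :=
  Gproc d Z n K h z ω / Real.sqrt (2 * f z * n * h * Real.log (1 / h))


/-- The dilated kernel `K_{ρ'}(x) = K(ρ'^{-1/d} x)`. -/
def Kdil (d : ℕ) (K : (Fin d → ℝ) → ℝ) (ρ' : ℝ) : (Fin d → ℝ) → ℝ :=
  fun x => K ((ρ' ^ (1 / (d : ℝ)))⁻¹ • x)

/-- The class `𝒢' = {K_{ρ'} : K ∈ 𝒢, 1 ≤ ρ' ≤ 2}`. -/
def Gdil (d : ℕ) (𝒢 : Set ((Fin d → ℝ) → ℝ)) : Set ((Fin d → ℝ) → ℝ) :=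
  {F | ∃ K ∈ 𝒢, ∃ ρ' ∈ Icc (1:ℝ) 2, F = Kdil d K ρ'}
/-!
Every `Ψ ∈ 𝕂_{𝒢'}` is `Ψ(F) = ∫ g F` on `𝒢'` with `‖g‖₂²` arbitrarily close to `1`, so by
Cauchy–Schwarz `|a Ψ(F₁) - Ψ(F₂)| ≤ ‖a F₁ - F₂‖₂`. With `F₁ = K_{ρ'} = K(λ ·)`, `λ = ρ'^{-1/d}`, and
`F₂ = K`, that norm is controlled by `|α - 1| ‖K_{ρ'}‖₂ + ‖K(λ ·) - K‖₂`. Since `ρ'⁻¹ ≤ α² ≤ 1`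
we have `|α - 1| ≤ ρ' - 1`, and `‖K_{ρ'}‖₂² ≤ vol [0,2]^d` by (HK2)–(HK3); the second term tends
to `0` uniformly in `K ∈ 𝒢` as `λ → 1`, by (HK1).
-/

section L2

variable {α : Type*} [MeasurableSpace α] {μ : Measure α}

theorem abs_integral_mul_le_sqrt_mul_sqrt {f g : α → ℝ} (hf : MemLp f 2 μ) (hg : MemLp g 2 μ) :
    |∫ x, f x * g x ∂μ| ≤ √(∫ x, f x ^ 2 ∂μ) * √(∫ x, g x ^ 2 ∂μ) := by
  have hofReal : ENNReal.ofReal 2 = 2 := by norm_num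
  have holder := integral_mul_norm_le_Lp_mul_Lq (μ := μ) Real.HolderConjugate.two_two
    (hofReal ▸ hf) (hofReal ▸ hg)
  simp only [Real.norm_eq_abs, Real.rpow_two, sq_abs, ← Real.sqrt_eq_rpow] at holder
  calc |∫ x, f x * g x ∂μ| ≤ ∫ x, |f x * g x| ∂μ := abs_integral_le_integral_abs
    _ = ∫ x, |f x| * |g x| ∂μ := by simp only [abs_mul]
    _ ≤ _ := holder

theorem integral_sq_mul_sub_le {f g : α → ℝ} (hf : MemLp f 2 μ) (hg : MemLp g 2 μ) (a : ℝ) :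
    ∫ x, (a * f x - g x) ^ 2 ∂μ ≤
      2 * (a - 1) ^ 2 * ∫ x, f x ^ 2 ∂μ + 2 * ∫ x, (f x - g x) ^ 2 ∂μ := by
  have hf2 : Integrable (fun x => 2 * (a - 1) ^ 2 * f x ^ 2) μ := hf.integrable_sq.const_mul _
  have hfg2 : Integrable (fun x => 2 * (f x - g x) ^ 2) μ := (hf.sub hg).integrable_sq.const_mul _
  rw [← integral_const_mul, ← integral_const_mul, ← integral_add hf2 hfg2]
  refine integral_mono (((hf.const_mul a).sub hg).integrable_sq) (hf2.add hfg2) fun x => ?_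
  -- `a f - g = (a - 1) f + (f - g)`
  nlinarith [sq_nonneg ((a - 1) * f x - (f x - g x))]

theorem memLp_of_abs_le_of_support_subset {f : α → ℝ} {s : Set α} {C : ℝ}
    (hf : AEStronglyMeasurable f μ) (hs : MeasurableSet s) (hμs : μ s ≠ ∞)
    (hC : ∀ x, |f x| ≤ C) (hsupp : Function.support f ⊆ s) (p : ℝ≥0∞) : MemLp f p μ := by
  refine (memLp_indicator_const p hs C (Or.inr hμs)).of_le hf (ae_of_all _ fun x => ?_)
  by_cases hx : x ∈ s
  · simpa [hx] using (hC x).trans (le_abs_self C)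
  · simp [hx, Function.notMem_support.1 fun h => hx (hsupp h)]

theorem integral_sq_le_of_abs_le_of_support_subset {f : α → ℝ} {s : Set α} {C : ℝ}
    (hμs : μ s ≠ ∞) (hC : ∀ x, |f x| ≤ C) (hsupp : Function.support f ⊆ s) :
    ∫ x, f x ^ 2 ∂μ ≤ C ^ 2 * μ.real s := by
  rw [← setIntegral_eq_integral_of_forall_compl_eq_zero fun x hx => by
    simp [Function.notMem_support.1 fun h => hx (hsupp h)]]
  refine (Real.le_norm_self _).trans (norm_setIntegral_le_of_norm_le_const hμs.lt_top fun x _ => ?_)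
  simpa [Real.norm_eq_abs, sq_abs] using pow_le_pow_left₀ (abs_nonneg _) (hC x) 2

end L2

theorem le_biSup_of_forall_le {ι : Type*} {s : Set ι} {f : ι → ℝ} {B : ℝ}
    (hB : ∀ i ∈ s, f i ≤ B) {i : ι} (hi : i ∈ s) : f i ≤ ⨆ j ∈ s, f j :=
  le_ciSup₂ (f := fun j (_ : j ∈ s) => f j)
    ⟨B, by
      simp only [mem_upperBounds, mem_iUnion, mem_range]
      rintro _ ⟨j, hj, rfl⟩
      exact hB j hj⟩ i hi

theorem mem_Icc_zero_two_of_smul_mem_Icc_zero_one {ι : Type*} {c : ℝ} (hc : 1 / 2 ≤ c)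
    {x : ι → ℝ} (hx : c • x ∈ Icc 0 1) : x ∈ Icc 0 2 := by
  have hxi : ∀ i, 0 ≤ c * x i ∧ c * x i ≤ 1 := fun i => ⟨hx.1 i, hx.2 i⟩
  have hx0 : ∀ i, 0 ≤ x i := fun i => nonneg_of_mul_nonneg_right (hxi i).1 (by linarith)
  exact ⟨hx0, fun i => show x i ≤ 2 by nlinarith [hxi i, hx0 i]⟩

theorem abs_sqrt_inv_mul_one_add_mul_log_sub_one_le {ρ u : ℝ} (hρ : 1 ≤ ρ) (hu₀ : 0 ≤ u)
    (hu₁ : u ≤ 1) : |√(ρ⁻¹ * (1 + u * Real.log ρ)) - 1| ≤ ρ - 1 := by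
  have hρ₀ : 0 < ρ := by linarith
  set t := ρ⁻¹ * (1 + u * Real.log ρ)
  have hlog : 0 ≤ Real.log ρ := Real.log_nonneg hρ
  -- `log ρ ≤ ρ - 1` squeezes `t` between `ρ⁻¹` and `1`
  have ht_ge : ρ⁻¹ ≤ t := le_mul_of_one_le_right (by positivity) (by nlinarith)
  have ht_le : t ≤ 1 := by
    rw [inv_mul_le_one₀ hρ₀]
    nlinarith [Real.log_le_sub_one_of_pos hρ₀]
  have hsqrt_ge : t ≤ √t := Real.le_sqrt_of_sq_le (by nlinarith [(inv_pos.2 hρ₀).trans_le ht_ge])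
  have hinv : 1 - ρ⁻¹ ≤ ρ - 1 := by
    rw [sub_le_iff_le_add, ← sub_le_iff_le_add']
    nlinarith [inv_le_one_of_one_le₀ hρ, mul_inv_cancel₀ hρ₀.ne']
  rw [abs_sub_comm, abs_of_nonneg (sub_nonneg.2 (Real.sqrt_le_one.2 ht_le))]
  linarith

theorem exists_integral_sq_lt_of_mem_KsetG {d : ℕ} {𝒢 : Set ((Fin d → ℝ) → ℝ)}
    {Ψ : ((Fin d → ℝ) → ℝ) → ℝ} (hΨ : Ψ ∈ KsetG d 𝒢) {r : ℝ} (hr : 1 < r) :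
    ∃ g, MemLp g 2 volume ∧ ∫ x, g x ^ 2 < r ∧ ∀ K ∈ 𝒢, Ψ K = ∫ x, g x * K x := by
  have hJ : JrateFn d 𝒢 Ψ < ENNReal.ofReal r := lt_of_le_of_lt hΨ (ENNReal.one_lt_ofReal.2 hr)
  rw [JrateFn, sInf_lt_iff] at hJ
  obtain ⟨_, ⟨g, -, hg, -, hΨg, rfl⟩, hgr⟩ := hJ
  exact ⟨g, hg, (ENNReal.ofReal_lt_ofReal_iff (by linarith)).1 hgr, hΨg⟩

theorem abs_mul_sub_le_of_mem_KsetG {d : ℕ} {𝒢 : Set ((Fin d → ℝ) → ℝ)}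
    {Ψ : ((Fin d → ℝ) → ℝ) → ℝ} (hΨ : Ψ ∈ KsetG d 𝒢) {F₁ F₂ : (Fin d → ℝ) → ℝ}
    (h₁ : F₁ ∈ 𝒢) (h₂ : F₂ ∈ 𝒢) (hL₁ : MemLp F₁ 2 volume) (hL₂ : MemLp F₂ 2 volume) (a : ℝ) :
    |a * Ψ F₁ - Ψ F₂| ≤ √(∫ x, (a * F₁ x - F₂ x) ^ 2) := by
  have hbound : ∀ r > 1, |a * Ψ F₁ - Ψ F₂| ≤ √r * √(∫ x, (a * F₁ x - F₂ x) ^ 2) := by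
    intro r hr
    obtain ⟨g, hg, hgr, hΨg⟩ := exists_integral_sq_lt_of_mem_KsetG hΨ hr
    have hrepr : a * Ψ F₁ - Ψ F₂ = ∫ x, g x * (a * F₁ x - F₂ x) := by
      have hgF₁ : Integrable (fun x => g x * F₁ x) := hg.integrable_mul hL₁
      have hgF₂ : Integrable (fun x => g x * F₂ x) := hg.integrable_mul hL₂
      rw [hΨg F₁ h₁, hΨg F₂ h₂, ← integral_const_mul, ← integral_sub (hgF₁.const_mul a) hgF₂]
      exact integral_congr_ae (ae_of_all _ fun x => by ring)
    rw [hrepr]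
    exact (abs_integral_mul_le_sqrt_mul_sqrt hg ((hL₁.const_mul a).sub hL₂)).trans
      (mul_le_mul_of_nonneg_right (Real.sqrt_le_sqrt hgr.le) (Real.sqrt_nonneg _))
  have hlim : Tendsto (fun r => √r * √(∫ x, (a * F₁ x - F₂ x) ^ 2)) (𝓝[>] 1)
      (𝓝 √(∫ x, (a * F₁ x - F₂ x) ^ 2)) := by
    simpa using ((Real.continuous_sqrt.tendsto 1).mul_const _).mono_left nhdsWithin_le_nhds
  exact ge_of_tendsto hlim (eventually_nhdsWithin_of_forall hbound)

section Kernels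

variable {d : ℕ} {𝒢 : Set ((Fin d → ℝ) → ℝ)} {K : (Fin d → ℝ) → ℝ} {c : ℝ}

theorem HK3.support_comp_smul_subset_Icc_zero_two (hHK3 : HK3 d 𝒢) (hK : K ∈ 𝒢) (hc : 1 / 2 ≤ c) :
    Function.support (fun x => K (c • x)) ⊆ Icc 0 2 := fun _ hx =>
  mem_Icc_zero_two_of_smul_mem_Icc_zero_one hc (by_contra fun h => hx (hHK3 K hK _ h))

theorem HK3.support_subset_Icc_zero_two (hHK3 : HK3 d 𝒢) (hK : K ∈ 𝒢) :
    Function.support K ⊆ Icc 0 2 := by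
  simpa using hHK3.support_comp_smul_subset_Icc_zero_two hK (c := 1) (by norm_num)

theorem HKbase.memLp_comp_smul (hHK : HKbase d 𝒢) (hHK3 : HK3 d 𝒢) (hK : K ∈ 𝒢)
    (hc : 1 / 2 ≤ c) : MemLp (fun x => K (c • x)) 2 volume :=
  memLp_of_abs_le_of_support_subset
    ((hHK.meas K hK).comp (measurable_const_smul c)).aestronglyMeasurable measurableSet_Icc
    isCompact_Icc.measure_lt_top.ne (fun _ => hHK.hk2 K hK _)
    (hHK3.support_comp_smul_subset_Icc_zero_two hK hc) 2

theorem HKbase.memLp (hHK : HKbase d 𝒢) (hHK3 : HK3 d 𝒢) (hK : K ∈ 𝒢) :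
    MemLp K 2 volume := by
  simpa using hHK.memLp_comp_smul hHK3 hK (c := 1) (by norm_num)

theorem HKbase.integral_sq_comp_smul_le (hHK : HKbase d 𝒢) (hHK3 : HK3 d 𝒢) (hK : K ∈ 𝒢)
    (hc : 1 / 2 ≤ c) : ∫ x, K (c • x) ^ 2 ≤ volume.real (Icc (0 : Fin d → ℝ) 2) := by
  simpa using integral_sq_le_of_abs_le_of_support_subset isCompact_Icc.measure_lt_top.ne
    (fun _ => hHK.hk2 K hK _) (hHK3.support_comp_smul_subset_Icc_zero_two hK hc)

theorem HKbase.integral_sq_comp_smul_sub_le (hHK : HKbase d 𝒢) (hHK3 : HK3 d 𝒢) (hK : K ∈ 𝒢)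
    (hc : 1 / 2 ≤ c) :
    ∫ x, (K (c • x) - K x) ^ 2 ≤ 4 * volume.real (Icc (0 : Fin d → ℝ) 2) := by
  have hbound : ∀ x, |K (c • x) - K x| ≤ 2 := fun x =>
    (abs_sub _ _).trans (by linarith [hHK.hk2 K hK (c • x), hHK.hk2 K hK x])
  have hsupp := (Function.support_sub _ _).trans
    (union_subset (hHK3.support_comp_smul_subset_Icc_zero_two hK hc)
      (hHK3.support_subset_Icc_zero_two hK))
  simpa only [show (2 : ℝ) ^ 2 = 4 by norm_num] using
    integral_sq_le_of_abs_le_of_support_subset isCompact_Icc.measure_lt_top.ne hbound hsupp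

theorem HKbase.eventually_forall_integral_sq_comp_smul_sub_lt (hHK : HKbase d 𝒢)
    (hHK3 : HK3 d 𝒢) {η : ℝ} (hη : 0 < η) :
    ∀ᶠ c in 𝓝 (1 : ℝ), ∀ K ∈ 𝒢, ∫ x, (K (c • x) - K x) ^ 2 < η := by
  filter_upwards [hHK.hk1b.eventually (gt_mem_nhds hη), Ioi_mem_nhds one_half_lt_one]
    with c hsup hc K hK
  exact (le_biSup_of_forall_le (fun K' hK' => hHK.integral_sq_comp_smul_sub_le hHK3 hK' hc.le)
    hK).trans_lt hsup

theorem HKbase.abs_mul_comp_smul_sub_le (hHK : HKbase d 𝒢) (hHK3 : HK3 d 𝒢) (hK : K ∈ 𝒢)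
    (hc : 1 / 2 ≤ c) {𝒢' : Set ((Fin d → ℝ) → ℝ)} {Ψ : ((Fin d → ℝ) → ℝ) → ℝ}
    (hΨ : Ψ ∈ KsetG d 𝒢') (hKc' : (fun x => K (c • x)) ∈ 𝒢') (hK' : K ∈ 𝒢') (a : ℝ) :
    |a * Ψ (fun x => K (c • x)) - Ψ K| ≤
      √(2 * (a - 1) ^ 2 * volume.real (Icc (0 : Fin d → ℝ) 2) +
        2 * ∫ x, (K (c • x) - K x) ^ 2) := by
  have hKc := hHK.memLp_comp_smul hHK3 hK hc
  refine (abs_mul_sub_le_of_mem_KsetG hΨ hKc' hK' hKc (hHK.memLp hHK3 hK) a).trans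
    (Real.sqrt_le_sqrt ((integral_sq_mul_sub_le hKc (hHK.memLp hHK3 hK) a).trans ?_))
  gcongr
  exact hHK.integral_sq_comp_smul_le hHK3 hK hc

end Kernels

theorem Kdil_mem_Gdil {d : ℕ} {𝒢 : Set ((Fin d → ℝ) → ℝ)} {K : (Fin d → ℝ) → ℝ} (hK : K ∈ 𝒢)
    {ρ : ℝ} (hρ : ρ ∈ Icc (1 : ℝ) 2) : Kdil d K ρ ∈ Gdil d 𝒢 :=
  ⟨K, hK, ρ, hρ, rfl⟩

theorem Kdil_one (d : ℕ) (K : (Fin d → ℝ) → ℝ) : Kdil d K 1 = K := by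
  funext x
  simp [Kdil]

theorem mem_Gdil_of_mem {d : ℕ} {𝒢 : Set ((Fin d → ℝ) → ℝ)} {K : (Fin d → ℝ) → ℝ}
    (hK : K ∈ 𝒢) : K ∈ Gdil d 𝒢 :=
  Kdil_one d K ▸ Kdil_mem_Gdil hK ⟨le_rfl, one_le_two⟩

theorem tendsto_inv_rpow_nhds_one (q : ℝ) :
    Tendsto (fun ρ : ℝ => (ρ ^ q)⁻¹) (𝓝 1) (𝓝 1) := by
  simpa using (Real.continuousAt_rpow_const 1 q (Or.inl one_ne_zero)).tendsto.inv₀ (by simp)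

theorem HKbase.eventually_abs_mul_Kdil_sub_le {d : ℕ} {𝒢 : Set ((Fin d → ℝ) → ℝ)}
    (hHK : HKbase d 𝒢) (hHK3 : HK3 d 𝒢) {ε : ℝ} (hε : 0 < ε) :
    ∀ᶠ ρ' in 𝓝 (1 : ℝ), 1 ≤ ρ' → ∀ Ψ ∈ KsetG d (Gdil d 𝒢), ∀ u' ∈ Icc (0 : ℝ) 1, ∀ K ∈ 𝒢,
      |√(ρ'⁻¹ * (1 + u' * Real.log ρ')) * Ψ (Kdil d K ρ') - Ψ K| ≤ ε := by
  set V := volume.real (Icc (0 : Fin d → ℝ) 2)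
  have hfactor := tendsto_inv_rpow_nhds_one (1 / (d : ℝ))
  have hquad : Tendsto (fun ρ : ℝ => 2 * (ρ - 1) ^ 2 * V) (𝓝 1) (𝓝 0) := by
    simpa using (((continuous_sub_right (1 : ℝ)).pow 2).const_mul 2 |>.mul_const V).tendsto 1
  filter_upwards [eventually_lt_nhds one_lt_two,
    hfactor.eventually (eventually_gt_nhds one_half_lt_one),
    hfactor.eventually (hHK.eventually_forall_integral_sq_comp_smul_sub_lt hHK3
      (by positivity : 0 < ε ^ 2 / 4)),
    hquad.eventually (gt_mem_nhds (by positivity : 0 < ε ^ 2 / 2))]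
    with ρ' hρ'2 hc hdiff hquadρ' hρ'1 Ψ hΨ u' hu' K hK
  set a := √(ρ'⁻¹ * (1 + u' * Real.log ρ'))
  have ha : (a - 1) ^ 2 ≤ (ρ' - 1) ^ 2 := sq_le_sq.2 <| by
    rw [abs_of_nonneg (by linarith : 0 ≤ ρ' - 1)]
    exact abs_sqrt_inv_mul_one_add_mul_log_sub_one_le hρ'1 hu'.1 hu'.2
  calc |a * Ψ (Kdil d K ρ') - Ψ K|
      ≤ √(2 * (a - 1) ^ 2 * V + 2 * ∫ x, (Kdil d K ρ' x - K x) ^ 2) :=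
        hHK.abs_mul_comp_smul_sub_le hHK3 hK hc.le hΨ
          (Kdil_mem_Gdil hK ⟨hρ'1, hρ'2.le⟩) (mem_Gdil_of_mem hK) a
    _ ≤ √(ε ^ 2) := by
        have hdiffK : ∫ x, (Kdil d K ρ' x - K x) ^ 2 < ε ^ 2 / 4 := hdiff K hK
        have haV : 2 * (a - 1) ^ 2 * V ≤ 2 * (ρ' - 1) ^ 2 * V :=
          mul_le_mul_of_nonneg_right (by linarith) measureReal_nonneg
        gcongr
        linarith
    _ = ε := Real.sqrt_sq hε.le

theorem statement16_general
    (d : ℕ)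
    (𝒢 : Set ((Fin d → ℝ) → ℝ)) (hHK : HKbase d 𝒢) (hHK3 : HK3 d 𝒢)
    (ε : ℝ) (hε : 0 < ε) :
    ∃ ρ > (1:ℝ), ∃ u > (0:ℝ),
      ∀ Ψ ∈ KsetG d (Gdil d 𝒢), ∀ ρ' ∈ Icc (1:ℝ) ρ, ∀ u' ∈ Icc (0:ℝ) u, ∀ K ∈ 𝒢,
        |Real.sqrt (ρ'⁻¹ * (1 + u' * Real.log ρ')) * Ψ (Kdil d K ρ') - Ψ K| ≤ ε := by
  obtain ⟨δ, hδ, hnear⟩ :=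
    Metric.eventually_nhds_iff.1 (hHK.eventually_abs_mul_Kdil_sub_le hHK3 hε)
  refine ⟨1 + δ / 2, by linarith, 1, one_pos, fun Ψ hΨ ρ' hρ' u' hu' K hK => ?_⟩
  refine hnear ?_ hρ'.1 Ψ hΨ u' hu' K hK
  rw [Real.dist_eq, abs_of_nonneg (by linarith [hρ'.1])]
  linarith [hρ'.2]

/-- (57) : uniform continuity of the elements of `𝕂_{𝒢'}` under dilation of the kernel
and perturbation of the normalization, where `α(ρ', u') = (ρ'⁻¹(1 + u' log ρ'))^{1/2}`. -/
theorem statement16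
    (d : ℕ) (hd : 1 ≤ d)
    (𝒢 : Set ((Fin d → ℝ) → ℝ)) (hHK : HKbase d 𝒢) (hHK3 : HK3 d 𝒢)
    (ε : ℝ) (hε : 0 < ε) :
    ∃ ρ > (1:ℝ), ∃ u > (0:ℝ),
      ∀ Ψ ∈ KsetG d (Gdil d 𝒢), ∀ ρ' ∈ Icc (1:ℝ) ρ, ∀ u' ∈ Icc (0:ℝ) u, ∀ K ∈ 𝒢,
        |Real.sqrt (ρ'⁻¹ * (1 + u' * Real.log ρ')) * Ψ (Kdil d K ρ') - Ψ K| ≤ ε :=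
  statement16_general d 𝒢 hHK hHK3 ε hε
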